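/- Let B* be a cooperation bound. If every vertex of the graph g has degree exactly B*, then g is strongly stable. -/

import Mathlib

variable {V : Type*}

/-- Degree of vertex `i` in the simple graph `g`. -/
noncomputable def deg [Fintype V] (g : SimpleGraph V) (i : V) : ℕ :=
  (g.neighborSet i).ncard

/-- Per-period utility of vertex `i` in the graph `g`:
`u_i(g) = α·v·(1 − (1−p)^{d_i(g)}) − Σ_{j ∈ N_i(g)} α·c·(1 − (1−p)^{d_j(g)})/d_j(g)`. -/
noncomputable def util [Fintype V] (α v c p : ℝ) (g : SimpleGraph V) (i : V) : ℝ :=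
  α * v * (1 - (1 - p) ^ deg g i) -
    ∑ j ∈ (g.neighborSet i).toFinite.toFinset,
      α * c * (1 - (1 - p) ^ deg g j) / (deg g j)

/-- The edge `ij` is sustainable at `g`. -/
def Sustainable [Fintype V] (α v c p δ γ : ℝ) (g : SimpleGraph V) (i j : V) : Prop :=
  (δ / (1 - δ)) * (util α v c p g i - util α v c p (g \ SimpleGraph.edge i j) i) ≥ c - γ ∧
  (δ / (1 - δ)) * (util α v c p g j - util α v c p (g \ SimpleGraph.edge i j) j) ≥ c - γ

/-- A graph is stable if every one of its edges is sustainable at it. -/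
def Stable [Fintype V] (α v c p δ γ : ℝ) (g : SimpleGraph V) : Prop :=
  ∀ i j : V, g.Adj i j → Sustainable α v c p δ γ g i j

/-- `f(n) = −(c − γ) + (δ/(1−δ))·( α·v·((1−p)^{n−1} − (1−p)^n) − (α·c/n)·(1 − (1−p)^n) )`. -/
noncomputable def fpay (α v c p δ γ : ℝ) (n : ℕ) : ℝ :=
  -(c - γ) + (δ / (1 - δ)) *
    (α * v * ((1 - p) ^ (n - 1) - (1 - p) ^ n) - (α * c / n) * (1 - (1 - p) ^ n))

/-- `B` is a cooperation bound: `f(n) ≥ 0` for `1 ≤ n ≤ B` and `f(n) < 0` for `n > B`. -/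
def IsCoopBound (α v c p δ γ : ℝ) (B : ℕ) : Prop :=
  ∀ n : ℕ, 1 ≤ n → (fpay α v c p δ γ n ≥ 0 ↔ n ≤ B)

/-- `g'` is obtainable from `g` via deviations by `{i,j}`: every edge of `g'` not in `g`
equals `ij`, and every edge of `g` not in `g'` is incident to `i` or to `j`. -/
def Obtainable (g g' : SimpleGraph V) (i j : V) : Prop :=
  (∀ x y : V, g'.Adj x y → ¬ g.Adj x y → s(x, y) = s(i, j)) ∧
  (∀ x y : V, g.Adj x y → ¬ g'.Adj x y → x = i ∨ x = j ∨ y = i ∨ y = j)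

/-- The pair `i, j` violates strong stability at `g` via `g'`. -/
def ViolatesSS [Fintype V] (α v c p δ γ : ℝ) (g g' : SimpleGraph V) (i j : V) : Prop :=
  Obtainable g g' i j ∧ g'.Adj i j ∧ ¬ g.Adj i j ∧
  Sustainable α v c p δ γ g' i j ∧
  util α v c p g' i ≥ util α v c p g i ∧
  util α v c p g' j ≥ util α v c p g j ∧
  (util α v c p g' i > util α v c p g i ∨ util α v c p g' j > util α v c p g j)

/-- A stable graph is strongly stable if no pair violates strong stability at it. -/
def StronglyStable [Fintype V] (α v c p δ γ : ℝ) (g : SimpleGraph V) : Prop :=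
  Stable α v c p δ γ g ∧
  ∀ (i j : V) (g' : SimpleGraph V), ¬ ViolatesSS α v c p δ γ g g' i j

/-! ### Auxiliary definitions and lemmas -/

/-- The cost that a neighbor of degree `d` imposes. -/
noncomputable def cost (α c p : ℝ) (d : ℕ) : ℝ := α * c * (1 - (1 - p) ^ d) / d

lemma util_eq' [Fintype V] (α v c p : ℝ) (g : SimpleGraph V) (i : V) :
    util α v c p g i = α * v * (1 - (1 - p) ^ deg g i) -
      ∑ j ∈ (g.neighborSet i).toFinite.toFinset, cost α c p (deg g j) := rfl

lemma mem_nbr [Fintype V] (g : SimpleGraph V) (i k : V) :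
    k ∈ (g.neighborSet i).toFinite.toFinset ↔ g.Adj i k := by
  simp [Set.Finite.mem_toFinset]

lemma deg_eq_card [Fintype V] (g : SimpleGraph V) (i : V) :
    deg g i = (g.neighborSet i).toFinite.toFinset.card :=
  Set.ncard_eq_toFinset_card _ _

lemma one_le_deg [Fintype V] {g : SimpleGraph V} {i j : V} (h : g.Adj i j) :
    1 ≤ deg g i :=
  (Set.ncard_pos (Set.toFinite _)).mpr ⟨j, h⟩

lemma edge_comm' (i j : V) : SimpleGraph.edge i j = SimpleGraph.edge j i := by
  ext x y; simp [SimpleGraph.edge_adj]; tauto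

lemma util_sub_del [Fintype V] (α v c p : ℝ) {g : SimpleGraph V} {i j : V} (h : g.Adj i j) :
    util α v c p g i - util α v c p (g \ SimpleGraph.edge i j) i =
      α * v * ((1 - p) ^ (deg g i - 1) - (1 - p) ^ (deg g i)) - cost α c p (deg g j) := by
  classical
  have hne : i ≠ j := h.ne
  set g' := g \ SimpleGraph.edge i j with hg'
  have hadj' : ∀ y, g'.Adj i y ↔ g.Adj i y ∧ y ≠ j := by
    intro y
    rw [hg', SimpleGraph.sdiff_adj, SimpleGraph.edge_adj]
    constructor
    · rintro ⟨ha, hb⟩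
      exact ⟨ha, fun hy => hb ⟨Or.inl ⟨rfl, hy⟩, ha.ne⟩⟩
    · rintro ⟨ha, hy⟩
      refine ⟨ha, fun hb => ?_⟩
      rcases hb.1 with ⟨h1, h2⟩ | ⟨h1, h2⟩
      exacts [hy h2, hne h1]
  have hNB : g'.neighborSet i = g.neighborSet i \ {j} := by
    ext y
    simp only [SimpleGraph.mem_neighborSet, Set.mem_diff, Set.mem_singleton_iff]
    exact hadj' y
  have hdeg : deg g' i = deg g i - 1 := by
    rw [deg, hNB]
    exact Set.ncard_diff_singleton_of_mem h
  have hdegk : ∀ k : V, k ≠ i → k ≠ j → deg g' k = deg g k := by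
    intro k hki hkj
    have : g'.neighborSet k = g.neighborSet k := by
      ext y
      simp only [SimpleGraph.mem_neighborSet, hg', SimpleGraph.sdiff_adj, SimpleGraph.edge_adj]
      constructor
      · exact fun ha => ha.1
      · intro ha
        refine ⟨ha, fun hb => ?_⟩
        rcases hb.1 with ⟨h1, -⟩ | ⟨h1, -⟩
        exacts [hki h1, hkj h1]
    rw [deg, this]; rfl
  have hFS : (g'.neighborSet i).toFinite.toFinset
      = ((g.neighborSet i).toFinite.toFinset).erase j := by
    ext y
    simp only [Set.Finite.mem_toFinset, Finset.mem_erase, hNB, Set.mem_diff,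
      Set.mem_singleton_iff]
    tauto
  have hsum : ∑ k ∈ (g'.neighborSet i).toFinite.toFinset, cost α c p (deg g' k)
      = (∑ k ∈ (g.neighborSet i).toFinite.toFinset, cost α c p (deg g k))
        - cost α c p (deg g j) := by
    rw [hFS]
    rw [show ∑ k ∈ ((g.neighborSet i).toFinite.toFinset).erase j, cost α c p (deg g' k)
        = ∑ k ∈ ((g.neighborSet i).toFinite.toFinset).erase j, cost α c p (deg g k) from
      Finset.sum_congr rfl (fun k hk => by
        rcases Finset.mem_erase.mp hk with ⟨hkj, hkmem⟩
        rw [hdegk k ((mem_nbr g i k).mp hkmem).ne' hkj])]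
    exact Finset.sum_erase_eq_sub ((mem_nbr g i j).mpr h)
  rw [util_eq', util_eq', hsum, hdeg]
  ring

lemma cost_succ_le (α c p : ℝ) (hα : 0 < α) (hc : 0 < c) (hp0 : 0 < p) (hp1 : p < 1)
    (b : ℕ) (hb : 1 ≤ b) : cost α c p (b + 1) ≤ cost α c p b := by
  set q : ℝ := 1 - p with hq
  have hq0 : 0 < q := by simp [hq]; linarith
  have hq1 : q < 1 := by simp [hq]; linarith
  have hx : (0:ℝ) ≤ (1 - q) / q := div_nonneg (by linarith) hq0.le
  have hber : 1 + (b:ℝ) * ((1 - q) / q) ≤ (1 + (1 - q) / q) ^ b :=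
    one_add_mul_le_pow (by linarith) b
  have h1q : 1 + (1 - q) / q = 1 / q := by field_simp; ring
  have hkey : q ^ b * (1 + (b:ℝ) * (1 - q)) ≤ 1 := by
    have h2 : (1:ℝ) + (b:ℝ) * (1 - q) ≤ 1 + (b:ℝ) * ((1 - q) / q) := by
      have : (1 - q) ≤ (1 - q) / q := by
        rw [le_div_iff₀ hq0]; nlinarith
      nlinarith [Nat.cast_nonneg (α := ℝ) b]
    have h3 : (1 + (1 - q) / q) ^ b = 1 / q ^ b := by
      rw [h1q, div_pow, one_pow]
    have h4 : (1:ℝ) + (b:ℝ) * (1 - q) ≤ 1 / q ^ b := by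
      rw [← h3]; linarith
    have hqb : 0 < q ^ b := pow_pos hq0 b
    calc q ^ b * (1 + (b:ℝ) * (1 - q)) ≤ q ^ b * (1 / q ^ b) :=
          mul_le_mul_of_nonneg_left h4 hqb.le
      _ = 1 := by field_simp
  have hb0 : (0:ℝ) < b := by exact_mod_cast hb
  rw [cost, cost, ← hq]
  rw [div_le_div_iff₀ (by push_cast; linarith) hb0]
  push_cast
  rw [pow_succ q b]
  nlinarith [mul_le_mul_of_nonneg_left hkey (mul_pos hα hc).le, mul_pos hα hc,
    pow_nonneg hq0.le b]

lemma cost_anti (α c p : ℝ) (hα : 0 < α) (hc : 0 < c) (hp0 : 0 < p) (hp1 : p < 1)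
    {a b : ℕ} (ha : 1 ≤ a) (hab : a ≤ b) : cost α c p b ≤ cost α c p a := by
  induction b, hab using Nat.le_induction with
  | base => exact le_refl _
  | succ n hn ih => exact le_trans (cost_succ_le α c p hα hc hp0 hp1 n (le_trans ha hn)) ih

lemma A2 (α v c p δ γ : ℝ) (hδ0 : 0 < δ) (hδ1 : δ < 1) (hγc : γ < c)
    {B : ℕ} (hB : IsCoopBound α v c p δ γ B) {t : ℕ} (ht1 : 1 ≤ t) (htB : t ≤ B) :
    cost α c p t < α * v * ((1 - p) ^ (t - 1) - (1 - p) ^ t) := by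
  have hf : fpay α v c p δ γ t ≥ 0 := (hB t ht1).mpr htB
  have hD : 0 < δ / (1 - δ) := div_pos hδ0 (by linarith)
  rw [fpay] at hf
  have hcost : cost α c p t = (α * c / t) * (1 - (1 - p) ^ t) := by rw [cost]; ring
  rw [hcost]
  by_contra hE
  push_neg at hE
  nlinarith

lemma geom_bound (α v c p δ γ : ℝ) (hα : 0 < α) (hc : 0 < c) (hp0 : 0 < p) (hp1 : p < 1)
    (hδ0 : 0 < δ) (hδ1 : δ < 1) (hγc : γ < c)
    {B : ℕ} (hB : IsCoopBound α v c p δ γ B) :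
    ∀ (d n : ℕ), 1 ≤ n → n + d ≤ B →
      (d:ℝ) * cost α c p B ≤ α * v * ((1 - p) ^ n - (1 - p) ^ (n + d)) := by
  intro d
  induction d with
  | zero => intro n h1 hle; simp
  | succ d ih =>
    intro n h1 hle
    have ihs := ih (n + 1) (by omega) (by omega)
    have hA2 := A2 α v c p δ γ hδ0 hδ1 hγc hB (t := n + 1) (by omega) (by omega)
    have hmono := cost_anti α c p hα hc hp0 hp1 (a := n + 1) (b := B) (by omega) (by omega)
    have e1 : n + 1 - 1 = n := by omega
    rw [e1] at hA2
    have e2 : n + (d + 1) = (n + 1) + d := by omega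
    rw [e2]
    push_cast
    linarith

/-- Core one-sided bound for the "both degrees ≤ B" case. -/
lemma util_le_of_small [Fintype V] (α v c p δ γ : ℝ)
    (hα : 0 < α) (hc : 0 < c) (hp0 : 0 < p) (hp1 : p < 1)
    (hδ0 : 0 < δ) (hδ1 : δ < 1) (hγc : γ < c)
    {B : ℕ} (hB : IsCoopBound α v c p δ γ B)
    {g g' : SimpleGraph V} (hreg : ∀ i : V, deg g i = B) {i j : V}
    (h1 : ∀ x y : V, g'.Adj x y → ¬ g.Adj x y → s(x, y) = s(i, j))
    (hadj' : g'.Adj i j)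
    (hni : deg g' i ≤ B) (hmj : deg g' j ≤ B) :
    util α v c p g' i ≤ util α v c p g i := by
  classical
  have hn1 : 1 ≤ deg g' i := one_le_deg hadj'
  -- every neighbor of i in g' has degree between 1 and B
  have hdegk : ∀ k ∈ (g'.neighborSet i).toFinite.toFinset,
      1 ≤ deg g' k ∧ deg g' k ≤ B := by
    intro k hk
    have hik : g'.Adj i k := (mem_nbr g' i k).mp hk
    refine ⟨one_le_deg hik.symm, ?_⟩
    by_cases hkj : k = j
    · exact hkj ▸ hmj
    · have hki : k ≠ i := hik.ne'
      have hsub : g'.neighborSet k ⊆ g.neighborSet k := by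
        intro y hy
        have hy' : g'.Adj k y := hy
        by_contra hgy
        have hgy' : ¬ g.Adj k y := hgy
        rcases Sym2.eq_iff.mp (h1 k y hy' hgy') with ⟨e, -⟩ | ⟨e, -⟩
        exacts [hki e, hkj e]
      calc deg g' k ≤ deg g k := Set.ncard_le_ncard hsub (Set.toFinite _)
        _ = B := hreg k
  -- sum lower bound: each neighbor costs at least cost B
  have hsum : (deg g' i : ℝ) * cost α c p B
      ≤ ∑ k ∈ (g'.neighborSet i).toFinite.toFinset, cost α c p (deg g' k) := by
    have := Finset.card_nsmul_le_sum (g'.neighborSet i).toFinite.toFinset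
      (fun k => cost α c p (deg g' k)) (cost α c p B)
      (fun k hk => cost_anti α c p hα hc hp0 hp1 (hdegk k hk).1 (hdegk k hk).2)
    rw [← deg_eq_card] at this
    simpa [nsmul_eq_mul] using this
  -- exact value of util g i
  have hgi : util α v c p g i = α * v * (1 - (1 - p) ^ B) - (B:ℝ) * cost α c p B := by
    rw [util_eq', hreg i]
    have : ∑ k ∈ (g.neighborSet i).toFinite.toFinset, cost α c p (deg g k)
        = ∑ k ∈ (g.neighborSet i).toFinite.toFinset, cost α c p B :=
      Finset.sum_congr rfl (fun k _ => by rw [hreg k])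
    rw [this, Finset.sum_const, ← deg_eq_card, hreg i, nsmul_eq_mul]
  -- geometric bound
  have hgeom : ((B:ℝ) - (deg g' i : ℝ)) * cost α c p B
      ≤ α * v * ((1 - p) ^ (deg g' i) - (1 - p) ^ B) := by
    have := geom_bound α v c p δ γ hα hc hp0 hp1 hδ0 hδ1 hγc hB (B - deg g' i)
      (deg g' i) hn1 (by omega)
    rw [show deg g' i + (B - deg g' i) = B from by omega] at this
    have hcast : ((B - deg g' i : ℕ) : ℝ) = (B:ℝ) - (deg g' i : ℝ) := by
      push_cast [Nat.cast_sub hni]; ring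
    rwa [hcast] at this
  rw [util_eq', hgi]
  linarith

theorem regular_bound_network_strongly_stable [Fintype V] (α v c p δ γ : ℝ)
    (hα : 0 < α) (hv : 0 < v) (hc : 0 < c) (hp0 : 0 < p) (hp1 : p < 1)
    (hδ0 : 0 < δ) (hδ1 : δ < 1) (hγ0 : 0 ≤ γ) (hγc : γ < c)
    (B : ℕ) (hB : IsCoopBound α v c p δ γ B)
    (g : SimpleGraph V) (hreg : ∀ i : V, deg g i = B) :
    StronglyStable α v c p δ γ g := by
  have hD : 0 < δ / (1 - δ) := div_pos hδ0 (by linarith)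
  have hcγ : 0 < c - γ := by linarith
  constructor
  · -- Stable
    intro i j hadj
    have hB1 : 1 ≤ B := hreg i ▸ one_le_deg hadj
    have hf : fpay α v c p δ γ B ≥ 0 := (hB B hB1).mpr le_rfl
    rw [fpay] at hf
    have hcost : cost α c p B = (α * c / B) * (1 - (1 - p) ^ B) := by rw [cost]; ring
    constructor
    · rw [ge_iff_le, util_sub_del α v c p hadj, hreg i, hreg j, hcost]
      linarith
    · rw [ge_iff_le, edge_comm', util_sub_del α v c p hadj.symm, hreg j, hreg i, hcost]
      linarith
  · -- no violation
    rintro i j g' ⟨⟨h1, h2⟩, hadj', hnadj, ⟨hS1, hS2⟩, hui, huj, hstrict⟩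
    -- translate sustainability
    rw [util_sub_del α v c p hadj'] at hS1
    rw [edge_comm', util_sub_del α v c p hadj'.symm] at hS2
    have hn1 : 1 ≤ deg g' i := one_le_deg hadj'
    have hm1 : 1 ≤ deg g' j := one_le_deg hadj'.symm
    -- degree upper bound B+1
    have hub : ∀ a b : V, g'.Adj a b →
        (∀ x y : V, g'.Adj x y → ¬ g.Adj x y → s(x, y) = s(a, b)) → deg g' a ≤ B + 1 := by
      intro a b hab hsym
      have hsub : g'.neighborSet a ⊆ insert b (g.neighborSet a) := by
        intro k hk
        have hk' : g'.Adj a k := hk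
        by_cases hgk : g.Adj a k
        · exact Set.mem_insert_of_mem _ hgk
        · rcases Sym2.eq_iff.mp (hsym a k hk' hgk) with ⟨-, e2⟩ | ⟨e1, -⟩
          · exact e2 ▸ Set.mem_insert _ _
          · exact absurd e1 hab.ne
      calc deg g' a ≤ (insert b (g.neighborSet a)).ncard :=
            Set.ncard_le_ncard hsub (Set.toFinite _)
        _ ≤ (g.neighborSet a).ncard + 1 := Set.ncard_insert_le _ _
        _ = B + 1 := by rw [show (g.neighborSet a).ncard = deg g a from rfl, hreg a]
    have h1' : ∀ x y : V, g'.Adj x y → ¬ g.Adj x y → s(x, y) = s(j, i) :=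
      fun x y hx hy => (h1 x y hx hy).trans Sym2.eq_swap
    have hiub : deg g' i ≤ B + 1 := hub i j hadj' h1
    have hjub : deg g' j ≤ B + 1 := hub j i hadj'.symm h1'
    -- f(B+1) < 0
    have hfneg : fpay α v c p δ γ (B + 1) < 0 :=
      lt_of_not_ge (fun hge => absurd ((hB (B + 1) (by omega)).mp hge) (by omega))
    rw [fpay] at hfneg
    have e1 : B + 1 - 1 = B := by omega
    rw [e1] at hfneg
    have hcostB1 : cost α c p (B + 1) = α * c / ((B + 1 : ℕ) : ℝ) * (1 - (1 - p) ^ (B + 1)) := by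
      rw [cost]; ring
    rcases le_or_gt (deg g' i) B with hni | hni
    · rcases le_or_gt (deg g' j) B with hmj | hmj
      · -- both degrees at most B : utilities cannot improve
        have hi := util_le_of_small α v c p δ γ hα hc hp0 hp1 hδ0 hδ1 hγc hB hreg
          h1 hadj' hni hmj
        have hj := util_le_of_small α v c p δ γ hα hc hp0 hp1 hδ0 hδ1 hγc hB hreg
          h1' hadj'.symm hmj hni
        rcases hstrict with hs | hs <;> linarith
      · -- deg g' j = B + 1 : contradiction with sustainability for j
        have hm : deg g' j = B + 1 := le_antisymm hjub hmj
        rw [hm, e1] at hS2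
        have hci : cost α c p (B + 1) ≤ cost α c p (deg g' i) :=
          cost_anti α c p hα hc hp0 hp1 hn1 hiub
        have hmul : δ / (1 - δ) * (α * v * ((1 - p) ^ B - (1 - p) ^ (B + 1))
              - cost α c p (deg g' i))
            ≤ δ / (1 - δ) * (α * v * ((1 - p) ^ B - (1 - p) ^ (B + 1))
              - cost α c p (B + 1)) :=
          mul_le_mul_of_nonneg_left (by linarith) hD.le
        rw [hcostB1] at hmul
        linarith
    · -- deg g' i = B + 1 : contradiction with sustainability for i
      have hn : deg g' i = B + 1 := le_antisymm hiub hni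
      rw [hn, e1] at hS1
      have hcj : cost α c p (B + 1) ≤ cost α c p (deg g' j) :=
        cost_anti α c p hα hc hp0 hp1 hm1 hjub
      have hmul : δ / (1 - δ) * (α * v * ((1 - p) ^ B - (1 - p) ^ (B + 1))
            - cost α c p (deg g' j))
          ≤ δ / (1 - δ) * (α * v * ((1 - p) ^ B - (1 - p) ^ (B + 1))
            - cost α c p (B + 1)) :=
        mul_le_mul_of_nonneg_left (by linarith) hD.le
      rw [hcostB1] at hmul
      linarith
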